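/- Under the hypotheses of Lemma (Lipschitz gradient of forward objective): if ‖Φ₁‖₂, ‖Φ₂‖₂ ≤ B, ‖YYᵀ‖₂ ≤ n_max, Π an orthogonal projection, and G(Φ) = (ΠΦΦᵀΠ + nλI)⁻¹, then ‖∇F_f(Φ₁) − ∇F_f(Φ₂)‖₂ ≤ (8B²n_max/(n³λ²) + 2n_max/(n²λ)) ‖Φ₁ − Φ₂‖₂, where ∇F_f(Φ) = −2λ Π G(Φ) Π YYᵀ Π G(Φ) Π Φ. -/

import Mathlib

open Matrix

noncomputable def specNorm {n D : ℕ} (A : Matrix (Fin n) (Fin D) ℝ) : ℝ :=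
  ‖LinearMap.toContinuousLinearMap (Matrix.toEuclideanLin A)‖

/-!
Write `W(Φ) = Π G(Φ) Π`, so that the gradient is `-2λ W(Φ) (YYᵀ) W(Φ) Φ`. As `ΠΦΦᵀΠ` is positive
semidefinite, `‖G(Φ)‖ ≤ (nλ)⁻¹`; the resolvent identity `G₁ - G₂ = G₁ (ΠΦ₂Φ₂ᵀΠ - ΠΦ₁Φ₁ᵀΠ) G₂`
together with `‖Φ₁Φ₁ᵀ - Φ₂Φ₂ᵀ‖ ≤ 2B ‖Φ₁ - Φ₂‖` then makes `G`, hence `W`, `2B/(nλ)²`-Lipschitz.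
Changing one factor of the gradient at a time, the two `W` factors contribute
`2λ · 2 · 2B/(nλ)² · n_max · (nλ)⁻¹ · B = 8B²n_max/(n³λ²)` and the last factor `Φ` contributes
`2λ · (nλ)⁻² · n_max = 2n_max/(n²λ)`.
-/

open RCLike
open scoped Matrix.Norms.L2Operator InnerProductSpace ComplexOrder

theorem norm_mul_mul_le_of_norm_le_one {R : Type*} [NonUnitalSeminormedRing R] {p : R}
    (hp : ‖p‖ ≤ 1) (a : R) : ‖p * a * p‖ ≤ ‖a‖ :=
  calc ‖p * a * p‖ ≤ ‖p‖ * ‖a‖ * ‖p‖ := norm_mul₃_le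
    _ ≤ 1 * ‖a‖ * 1 := by gcongr
    _ = ‖a‖ := by ring

theorem norm_mul_mul_sub_mul_mul_le {R : Type*} [NonUnitalSeminormedRing R] (a b k : R) :
    ‖a * k * a - b * k * b‖ ≤ ‖a - b‖ * ‖k‖ * (‖a‖ + ‖b‖) := by
  have h : a * k * a - b * k * b = (a - b) * k * a + b * k * (a - b) := by
    simp only [sub_mul, mul_sub]; abel
  calc ‖a * k * a - b * k * b‖ ≤ ‖a - b‖ * ‖k‖ * ‖a‖ + ‖b‖ * ‖k‖ * ‖a - b‖ := by
        rw [h]; exact (norm_add_le _ _).trans (add_le_add norm_mul₃_le norm_mul₃_le)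
    _ = ‖a - b‖ * ‖k‖ * (‖a‖ + ‖b‖) := by ring

theorem mul_norm_le_norm_apply_of_le_re_inner {𝕜 E : Type*} [RCLike 𝕜] [NormedAddCommGroup E]
    [InnerProductSpace 𝕜 E] {T : E → E} {c : ℝ} (h : ∀ x, c * ‖x‖ ^ 2 ≤ re ⟪T x, x⟫_𝕜)
    (x : E) : c * ‖x‖ ≤ ‖T x‖ := by
  rcases (norm_nonneg x).eq_or_lt with hx | hx
  · simp [← hx]
  refine le_of_mul_le_mul_right ?_ hx
  calc c * ‖x‖ * ‖x‖ = c * ‖x‖ ^ 2 := by ring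
    _ ≤ re ⟪T x, x⟫_𝕜 := h x
    _ ≤ ‖T x‖ * ‖x‖ := re_inner_le_norm _ _

namespace Matrix

variable {𝕜 : Type*} [RCLike 𝕜] {l m n : Type*}

theorem PosSemidef.posDef_add_smul_one [DecidableEq n] {S : Matrix n n 𝕜} (hS : S.PosSemidef)
    {c : ℝ} (hc : 0 < c) : (S + c • (1 : Matrix n n 𝕜)).PosDef :=
  PosDef.posSemidef_add hS (PosDef.one.smul hc)

variable [Fintype l] [Fintype m] [Fintype n]

theorem posSemidef_mul_mul_conjTranspose_mul {P : Matrix m m 𝕜} (hP : IsSelfAdjoint P)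
    (Φ : Matrix m n 𝕜) : (P * Φ * Φᴴ * P).PosSemidef := by
  have hPH : Pᴴ = P := hP
  simpa only [hPH, Matrix.mul_assoc] using
    (posSemidef_self_mul_conjTranspose Φ).mul_mul_conjTranspose_same P

theorem l2_opNorm_mul_sub_mul_le [DecidableEq n] [DecidableEq l] (A₁ A₂ : Matrix m n 𝕜)
    (B₁ B₂ : Matrix n l 𝕜) :
    ‖A₁ * B₁ - A₂ * B₂‖ ≤ ‖A₁ - A₂‖ * ‖B₁‖ + ‖A₂‖ * ‖B₁ - B₂‖ := by
  have h : A₁ * B₁ - A₂ * B₂ = (A₁ - A₂) * B₁ + A₂ * (B₁ - B₂) := by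
    rw [Matrix.sub_mul, Matrix.mul_sub]; abel
  rw [h]
  exact (norm_add_le _ _).trans (add_le_add (l2_opNorm_mul _ _) (l2_opNorm_mul _ _))

theorem l2_opNorm_mul_conjTranspose_sub_le [DecidableEq m] [DecidableEq n] {A B : Matrix m n 𝕜}
    {r : ℝ} (hA : ‖A‖ ≤ r) (hB : ‖B‖ ≤ r) : ‖A * Aᴴ - B * Bᴴ‖ ≤ 2 * r * ‖A - B‖ :=
  calc ‖A * Aᴴ - B * Bᴴ‖ ≤ ‖A - B‖ * ‖Aᴴ‖ + ‖B‖ * ‖Aᴴ - Bᴴ‖ := l2_opNorm_mul_sub_mul_le ..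
    _ = ‖A - B‖ * ‖A‖ + ‖B‖ * ‖A - B‖ := by
      rw [← conjTranspose_sub, l2_opNorm_conjTranspose, l2_opNorm_conjTranspose]
    _ ≤ ‖A - B‖ * r + r * ‖A - B‖ := by gcongr
    _ = 2 * r * ‖A - B‖ := by ring

theorem PosSemidef.l2_opNorm_inv_add_smul_one_le [DecidableEq n] {S : Matrix n n 𝕜}
    (hS : S.PosSemidef) {c : ℝ} (hc : 0 < c) : ‖(S + c • (1 : Matrix n n 𝕜))⁻¹‖ ≤ c⁻¹ := by
  set A := S + c • (1 : Matrix n n 𝕜)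
  have hcoer : ∀ x, c * ‖x‖ ^ 2 ≤ re ⟪toEuclideanCLM (𝕜 := 𝕜) A x, x⟫_𝕜 := by
    intro x
    have hSx := (isPositive_toEuclideanLin_iff.mpr hS).re_inner_nonneg_left x
    have hc1 : c • (1 : Matrix n n 𝕜) = (c : 𝕜) • 1 := RCLike.real_smul_eq_coe_smul _ _
    simp only [A, hc1, map_add, map_smul, map_one, _root_.add_apply, _root_.smul_apply,
      one_apply_eq_self, inner_add_left, inner_smul_real_left, RCLike.smul_re,
      inner_self_eq_norm_sq]
    exact le_add_of_nonneg_left hSx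
  rw [cstar_norm_def]
  refine ContinuousLinearMap.opNorm_le_bound _ (inv_nonneg.mpr hc.le) fun y => ?_
  have hy : toEuclideanCLM (𝕜 := 𝕜) A (toEuclideanCLM (𝕜 := 𝕜) A⁻¹ y) = y := by
    change (toEuclideanCLM (𝕜 := 𝕜) A * toEuclideanCLM (𝕜 := 𝕜) A⁻¹) y = y
    rw [← map_mul, mul_nonsing_inv _ ((isUnit_iff_isUnit_det A).mp
      (hS.posDef_add_smul_one hc).isUnit), map_one]
    rfl
  have hbelow := mul_norm_le_norm_apply_of_le_re_inner hcoer (toEuclideanCLM (𝕜 := 𝕜) A⁻¹ y)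
  rw [hy] at hbelow
  rwa [inv_mul_eq_div, le_div_iff₀' hc]

theorem PosSemidef.l2_opNorm_inv_add_smul_one_sub_le [DecidableEq n] {S₁ S₂ : Matrix n n 𝕜}
    (h₁ : S₁.PosSemidef) (h₂ : S₂.PosSemidef) {c : ℝ} (hc : 0 < c) :
    ‖(S₁ + c • (1 : Matrix n n 𝕜))⁻¹ - (S₂ + c • (1 : Matrix n n 𝕜))⁻¹‖ ≤
      c⁻¹ ^ 2 * ‖S₁ - S₂‖ := by
  rw [inv_sub_inv (iff_of_true (h₁.posDef_add_smul_one hc).isUnit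
    (h₂.posDef_add_smul_one hc).isUnit), add_sub_add_right_eq_sub]
  calc _ ≤ _ := norm_mul₃_le
    _ ≤ c⁻¹ * ‖S₁ - S₂‖ * c⁻¹ := by
      rw [norm_sub_rev S₂]
      gcongr
      exacts [h₁.l2_opNorm_inv_add_smul_one_le hc, h₂.l2_opNorm_inv_add_smul_one_le hc]
    _ = c⁻¹ ^ 2 * ‖S₁ - S₂‖ := by ring

theorem l2_opNorm_mul_mul_mul_sub_le [DecidableEq m] [DecidableEq n] (A₁ A₂ K : Matrix m m 𝕜)
    (X₁ X₂ : Matrix m n 𝕜) :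
    ‖A₁ * K * A₁ * X₁ - A₂ * K * A₂ * X₂‖ ≤
      ‖A₁ - A₂‖ * ‖K‖ * (‖A₁‖ + ‖A₂‖) * ‖X₁‖ + ‖A₂‖ * ‖K‖ * ‖A₂‖ * ‖X₁ - X₂‖ :=
  (l2_opNorm_mul_sub_mul_le _ _ _ _).trans <| by
    gcongr
    exacts [norm_mul_mul_sub_mul_mul_le _ _ _, norm_mul₃_le]

/-- `Π G(Φ) Π` with `G(Φ) = (Π Φ Φᴴ Π + c)⁻¹`; the theorem takes `c = nλ`. -/
noncomputable def compressedResolvent [DecidableEq m] (P : Matrix m m 𝕜) (c : ℝ)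
    (Φ : Matrix m n 𝕜) : Matrix m m 𝕜 :=
  P * (P * Φ * Φᴴ * P + c • (1 : Matrix m m 𝕜))⁻¹ * P

theorem l2_opNorm_compressedResolvent_le [DecidableEq m] {P : Matrix m m 𝕜}
    (hP : IsStarProjection P) {c : ℝ} (hc : 0 < c) (Φ : Matrix m n 𝕜) :
    ‖compressedResolvent P c Φ‖ ≤ c⁻¹ :=
  (norm_mul_mul_le_of_norm_le_one (IsStarProjection.norm_le P hP) _).trans
    ((posSemidef_mul_mul_conjTranspose_mul hP.isSelfAdjoint Φ).l2_opNorm_inv_add_smul_one_le hc)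

theorem l2_opNorm_compressedResolvent_sub_le [DecidableEq m] [DecidableEq n] {P : Matrix m m 𝕜}
    (hP : IsStarProjection P) {c : ℝ} (hc : 0 < c) {Φ₁ Φ₂ : Matrix m n 𝕜} {B : ℝ}
    (h₁ : ‖Φ₁‖ ≤ B) (h₂ : ‖Φ₂‖ ≤ B) :
    ‖compressedResolvent P c Φ₁ - compressedResolvent P c Φ₂‖ ≤
      c⁻¹ ^ 2 * (2 * B * ‖Φ₁ - Φ₂‖) := by
  have hP1 := IsStarProjection.norm_le P hP
  have hS := posSemidef_mul_mul_conjTranspose_mul (n := n) hP.isSelfAdjoint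
  calc _ = ‖P * ((P * Φ₁ * Φ₁ᴴ * P + c • (1 : Matrix m m 𝕜))⁻¹ -
          (P * Φ₂ * Φ₂ᴴ * P + c • (1 : Matrix m m 𝕜))⁻¹) * P‖ := by
        rw [compressedResolvent, compressedResolvent, mul_sub, sub_mul]
    _ ≤ _ := norm_mul_mul_le_of_norm_le_one hP1 _
    _ ≤ c⁻¹ ^ 2 * ‖P * Φ₁ * Φ₁ᴴ * P - P * Φ₂ * Φ₂ᴴ * P‖ :=
        (hS Φ₁).l2_opNorm_inv_add_smul_one_sub_le (hS Φ₂) hc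
    _ = c⁻¹ ^ 2 * ‖P * (Φ₁ * Φ₁ᴴ - Φ₂ * Φ₂ᴴ) * P‖ := by
        simp only [Matrix.mul_sub, Matrix.sub_mul, Matrix.mul_assoc]
    _ ≤ c⁻¹ ^ 2 * (2 * B * ‖Φ₁ - Φ₂‖) := by
        gcongr
        exact (norm_mul_mul_le_of_norm_le_one hP1 _).trans
          (l2_opNorm_mul_conjTranspose_sub_le h₁ h₂)

end Matrix

theorem specNorm_eq_l2_opNorm {n D : ℕ} (A : Matrix (Fin n) (Fin D) ℝ) : specNorm A = ‖A‖ := rfl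

theorem stmt_11_general (n D k : ℕ) (hn : 0 < n) (lam B n_max : ℝ) (hlam : 0 < lam)
    (P : Matrix (Fin n) (Fin n) ℝ) (hP2 : P * P = P) (hPT : Pᵀ = P)
    (Y : Matrix (Fin n) (Fin k) ℝ) (hY : specNorm (Y * Yᵀ) ≤ n_max)
    (Φ₁ Φ₂ : Matrix (Fin n) (Fin D) ℝ)
    (hΦ₁ : specNorm Φ₁ ≤ B) (hΦ₂ : specNorm Φ₂ ≤ B)
    (G : Matrix (Fin n) (Fin D) ℝ → Matrix (Fin n) (Fin n) ℝ)
    (hG : ∀ Ψ, G Ψ = (P * Ψ * Ψᵀ * P + ((n : ℝ) * lam) • (1 : Matrix (Fin n) (Fin n) ℝ))⁻¹) :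
    specNorm ((-(2 * lam)) • (P * G Φ₁ * P * (Y * Yᵀ) * P * G Φ₁ * P * Φ₁) -
        (-(2 * lam)) • (P * G Φ₂ * P * (Y * Yᵀ) * P * G Φ₂ * P * Φ₂))
      ≤ (8 * B ^ 2 * n_max / ((n : ℝ) ^ 3 * lam ^ 2) + 2 * n_max / ((n : ℝ) ^ 2 * lam)) *
        specNorm (Φ₁ - Φ₂) := by
  simp only [specNorm_eq_l2_opNorm] at hY hΦ₁ hΦ₂ ⊢
  have hc : 0 < (n : ℝ) * lam := by positivity
  have hP : IsStarProjection P :=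
    ⟨hP2, by
      rw [IsSelfAdjoint, star_eq_conjTranspose, conjTranspose_eq_transpose_of_trivial, hPT]⟩
  set W := compressedResolvent (n := Fin D) P ((n : ℝ) * lam)
  have hgrad : ∀ Ψ, P * G Ψ * P * (Y * Yᵀ) * P * G Ψ * P * Ψ = W Ψ * (Y * Yᵀ) * W Ψ * Ψ :=
    fun Ψ => by
      simp only [W, compressedResolvent, hG, conjTranspose_eq_transpose_of_trivial,
        Matrix.mul_assoc]
  have hW : ∀ Ψ, ‖W Ψ‖ ≤ ((n : ℝ) * lam)⁻¹ := l2_opNorm_compressedResolvent_le hP hc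
  have hWsub := l2_opNorm_compressedResolvent_sub_le hP hc hΦ₁ hΦ₂
  have hB : 0 ≤ B := (norm_nonneg _).trans hΦ₁
  have hmax : 0 ≤ n_max := (norm_nonneg _).trans hY
  rw [hgrad, hgrad, ← smul_sub, norm_smul, norm_neg, Real.norm_of_nonneg (by positivity)]
  calc 2 * lam * ‖W Φ₁ * (Y * Yᵀ) * W Φ₁ * Φ₁ - W Φ₂ * (Y * Yᵀ) * W Φ₂ * Φ₂‖
      ≤ 2 * lam * (‖W Φ₁ - W Φ₂‖ * ‖Y * Yᵀ‖ * (‖W Φ₁‖ + ‖W Φ₂‖) * ‖Φ₁‖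
          + ‖W Φ₂‖ * ‖Y * Yᵀ‖ * ‖W Φ₂‖ * ‖Φ₁ - Φ₂‖) := by
        gcongr; exact l2_opNorm_mul_mul_mul_sub_le ..
    _ ≤ 2 * lam * (((n : ℝ) * lam)⁻¹ ^ 2 * (2 * B * ‖Φ₁ - Φ₂‖) * n_max *
          (((n : ℝ) * lam)⁻¹ + ((n : ℝ) * lam)⁻¹) * B
          + ((n : ℝ) * lam)⁻¹ * n_max * ((n : ℝ) * lam)⁻¹ * ‖Φ₁ - Φ₂‖) := by
        gcongr <;> apply hW
    _ = (8 * B ^ 2 * n_max / ((n : ℝ) ^ 3 * lam ^ 2) + 2 * n_max / ((n : ℝ) ^ 2 * lam)) *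
          ‖Φ₁ - Φ₂‖ := by
        field_simp
        ring

theorem stmt_11 (n D k : ℕ) (hn : 0 < n) (lam B n_max : ℝ) (hlam : 0 < lam)
    (hB : 0 ≤ B) (hmax : 0 ≤ n_max)
    (P : Matrix (Fin n) (Fin n) ℝ) (hP2 : P * P = P) (hPT : Pᵀ = P)
    (Y : Matrix (Fin n) (Fin k) ℝ) (hY : specNorm (Y * Yᵀ) ≤ n_max)
    (Φ₁ Φ₂ : Matrix (Fin n) (Fin D) ℝ)
    (hΦ₁ : specNorm Φ₁ ≤ B) (hΦ₂ : specNorm Φ₂ ≤ B)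
    (G : Matrix (Fin n) (Fin D) ℝ → Matrix (Fin n) (Fin n) ℝ)
    (hG : ∀ Ψ, G Ψ = (P * Ψ * Ψᵀ * P + ((n : ℝ) * lam) • (1 : Matrix (Fin n) (Fin n) ℝ))⁻¹) :
    specNorm ((-(2 * lam)) • (P * G Φ₁ * P * (Y * Yᵀ) * P * G Φ₁ * P * Φ₁) -
        (-(2 * lam)) • (P * G Φ₂ * P * (Y * Yᵀ) * P * G Φ₂ * P * Φ₂))
      ≤ (8 * B ^ 2 * n_max / ((n : ℝ) ^ 3 * lam ^ 2) + 2 * n_max / ((n : ℝ) ^ 2 * lam)) *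
        specNorm (Φ₁ - Φ₂) :=
  stmt_11_general n D k hn lam B n_max hlam P hP2 hPT Y hY Φ₁ Φ₂ hΦ₁ hΦ₂ G hG
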